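/- Let W ∈ Gr₂(n,k) and x, z ∈ 𝔽₂ⁿ. Then H^{⊗n} |W_{x,z}⟩ = (−1)^{x·z} |W^⊥_{z,x}⟩, where H^{⊗n} is the n-fold tensor power of the Hadamard operator H = (1/√2)·[[1,1],[1,−1]] acting on (ℂ²)^{⊗n}. -/

import Mathlib

open scoped Classical in
/-- The coset state `|W_{x,z}⟩ = 2^{-k/2} ∑_{u ∈ W} (-1)^{z·u} |x+u⟩` in `(ℂ²)^{⊗n}`,
identified with `EuclideanSpace ℂ (Fin n → ZMod 2)` via the computational basis. -/
noncomputable def cosetState {n : ℕ} (W : Submodule (ZMod 2) (Fin n → ZMod 2))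
    (x z : Fin n → ZMod 2) : EuclideanSpace ℂ (Fin n → ZMod 2) :=
  (((Real.sqrt 2 : ℝ) : ℂ) ^ (Module.finrank (ZMod 2) W))⁻¹ •
    ∑ u : W, ((-1 : ℂ) ^ (dotProduct z (u : Fin n → ZMod 2)).val) •
      EuclideanSpace.single (x + (u : Fin n → ZMod 2)) (1 : ℂ)

/-- The dual space `W^⊥ = {y ∈ 𝔽₂ⁿ : x·y = 0 for all x ∈ W}` with respect to the standard
bilinear form `x·y = ∑ᵢ xᵢyᵢ`. -/
def dualSpace {n : ℕ} (W : Submodule (ZMod 2) (Fin n → ZMod 2)) :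
    Submodule (ZMod 2) (Fin n → ZMod 2) where
  carrier := {y | ∀ x ∈ W, dotProduct x y = 0}
  add_mem' := by
    intro a b ha hb x hx
    simp [dotProduct_add, ha x hx, hb x hx]
  zero_mem' := by
    intro x hx
    simp
  smul_mem' := by
    intro c a ha x hx
    simp [dotProduct_smul, ha x hx]

/-- The single-qubit Hadamard matrix `H = (1/√2)·[[1,1],[1,-1]]`, with rows and columns
indexed by `ZMod 2`. -/
noncomputable def hadamard : Matrix (ZMod 2) (ZMod 2) ℂ :=
  Matrix.of fun a b => ((Real.sqrt 2 : ℝ) : ℂ)⁻¹ * (-1 : ℂ) ^ (a.val * b.val)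

/-- The `n`-fold tensor power `H^{⊗n}`, acting on `(ℂ²)^{⊗n} ≅ ℂ^{2ⁿ}` with computational
basis indexed by `Fin n → ZMod 2`: its `(v,u)` entry is `∏ᵢ H_{vᵢ,uᵢ}`. -/
noncomputable def hadamardPow (n : ℕ) : Matrix (Fin n → ZMod 2) (Fin n → ZMod 2) ℂ :=
  Matrix.of fun v u => ∏ i, hadamard (v i) (u i)

/-
The matrix `H^{⊗n}` has entries `2^{-n/2} (-1)^{v·w}`. Applied to `|W_{x,z}⟩` it gives at `v` the
amplitude `2^{-(n+k)/2} (-1)^{v·x} ∑_{u ∈ W} (-1)^{(z+v)·u}`, and by orthogonality of characters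
of `W` the sum is `2^k` when `z + v ∈ W^⊥` and `0` otherwise. Since `dim W^⊥ = n - k` and
`v - z = z + v` over `𝔽₂`, this is the amplitude of `(-1)^{x·z} |W^⊥_{z,x}⟩` at `v`.
-/

open Matrix

lemma AddChar.map_sum_eq_prod {ι A M : Type*} [AddCommMonoid A] [CommMonoid M]
    (ψ : AddChar A M) (s : Finset ι) (f : ι → A) : ψ (∑ i ∈ s, f i) = ∏ i ∈ s, ψ (f i) := by
  induction s using Finset.cons_induction with
  | empty => simp
  | cons a s ha ih => rw [Finset.sum_cons, Finset.prod_cons, AddChar.map_add_eq_mul, ih]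

noncomputable def signChar : AddChar (ZMod 2) ℂ where
  toFun a := (-1) ^ a.val
  map_zero_eq_one' := pow_zero _
  map_add_eq_mul' a b := by rw [← pow_add, ZMod.val_add, ← neg_one_pow_eq_pow_mod_two]

lemma signChar_apply (a : ZMod 2) : signChar a = (-1) ^ a.val := rfl

lemma signChar_eq_one_iff {a : ZMod 2} : signChar a = 1 ↔ a = 0 := by
  fin_cases a
  · exact iff_of_true (AddChar.map_zero_eq_one _) rfl
  · exact iff_of_false (show (-1 : ℂ) ^ 1 ≠ 1 by norm_num) one_ne_zero

lemma signChar_mul_self (a : ZMod 2) : signChar a * signChar a = 1 := by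
  rw [← AddChar.map_add_eq_mul, CharTwo.add_self_eq_zero, AddChar.map_zero_eq_one]

section DualSpace

open scoped Classical

variable {n : ℕ} (W : Submodule (ZMod 2) (Fin n → ZMod 2))

lemma dualSpace_eq_orthogonal : dualSpace W = (Matrix.toBilin' 1).orthogonal W := by
  ext y
  simp [dualSpace, LinearMap.BilinForm.mem_orthogonal_iff, Matrix.toBilin'_apply']

lemma finrank_dualSpace :
    Module.finrank (ZMod 2) (dualSpace W) = n - Module.finrank (ZMod 2) W := by
  rw [dualSpace_eq_orthogonal, LinearMap.BilinForm.finrank_orthogonal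
    (Matrix.nondegenerate_of_det_ne_zero (by simp)).toBilin', Module.finrank_fin_fun]

noncomputable def dotProductChar (y : Fin n → ZMod 2) : AddChar W ℂ :=
  signChar.compAddMonoidHom ((dotProductEquiv (ZMod 2) (Fin n) y).toAddMonoidHom.comp
    W.subtype.toAddMonoidHom)

lemma dotProductChar_eq_zero_iff (y : Fin n → ZMod 2) :
    dotProductChar W y = 0 ↔ y ∈ dualSpace W := by
  rw [AddChar.eq_zero_iff]
  change (∀ u : W, signChar (y ⬝ᵥ u) = 1) ↔ ∀ x ∈ W, x ⬝ᵥ y = 0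
  simp only [signChar_eq_one_iff, dotProduct_comm y, Subtype.forall]

lemma sum_signChar_dotProduct (y : Fin n → ZMod 2) :
    ∑ u : W, signChar (y ⬝ᵥ u) =
      if y ∈ dualSpace W then 2 ^ Module.finrank (ZMod 2) W else 0 := by
  have := (dotProductChar W y).sum_eq_ite
  simp only [dotProductChar_eq_zero_iff] at this
  convert this using 2
  · rfl
  · rw [Module.card_eq_pow_finrank (K := ZMod 2), ZMod.card]
    push_cast; rfl

end DualSpace

lemma hadamard_apply (a b : ZMod 2) : hadamard a b = (√2 : ℂ)⁻¹ * signChar (a * b) := by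
  have val_mul : (a * b).val = a.val * b.val := by fin_cases a <;> fin_cases b <;> rfl
  rw [signChar_apply, val_mul]
  rfl

lemma hadamardPow_apply {n : ℕ} (v w : Fin n → ZMod 2) :
    hadamardPow n v w = ((√2 : ℂ) ^ n)⁻¹ * signChar (v ⬝ᵥ w) := by
  simp only [hadamardPow, Matrix.of_apply, hadamard_apply, Finset.prod_mul_distrib, dotProduct,
    AddChar.map_sum_eq_prod, Finset.prod_const, Finset.card_univ, Fintype.card_fin, inv_pow]

lemma Matrix.toEuclideanLin_single_one_apply {𝕜 m ι : Type*} [RCLike 𝕜] [Fintype ι]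
    [DecidableEq ι] (M : Matrix m ι 𝕜) (j : ι) (i : m) :
    toEuclideanLin M (EuclideanSpace.single j 1) i = M i j := by
  simp [Matrix.toLpLin_apply]

lemma sqrt_two_pow_inv_mul_pow_inv_mul_two_pow {k n : ℕ} (hkn : k ≤ n) :
    ((√2 : ℂ) ^ k)⁻¹ * ((√2 : ℂ) ^ n)⁻¹ * 2 ^ k = ((√2 : ℂ) ^ (n - k))⁻¹ := by
  obtain ⟨m, rfl⟩ := Nat.exists_eq_add_of_le hkn
  have two_eq : (2 : ℂ) = (√2 : ℂ) ^ 2 := by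
    rw [← Complex.ofReal_pow, Real.sq_sqrt zero_le_two, Complex.ofReal_ofNat]
  have sqrt_two_ne_zero : (√2 : ℂ) ≠ 0 := by exact_mod_cast Real.sqrt_ne_zero'.mpr two_pos
  rw [Nat.add_sub_cancel_left, two_eq, ← pow_mul, pow_add]
  field_simp
  ring

section CosetState

open scoped Classical

variable {n : ℕ} (W : Submodule (ZMod 2) (Fin n → ZMod 2))

lemma cosetState_apply (x z v : Fin n → ZMod 2) :
    cosetState W x z v = if v - x ∈ W then
      ((√2 : ℂ) ^ Module.finrank (ZMod 2) W)⁻¹ * signChar (z ⬝ᵥ (v - x)) else 0 := by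
  simp only [cosetState, WithLp.ofLp_smul, WithLp.ofLp_sum, Pi.smul_apply, Finset.sum_apply,
    PiLp.single_apply, smul_eq_mul, mul_ite, mul_one, mul_zero]
  split_ifs with h
  · rw [Fintype.sum_eq_single ⟨v - x, h⟩]
    · simp [signChar_apply]
    · intro u hu
      exact if_neg fun hv ↦ hu (Subtype.ext (sub_eq_iff_eq_add'.mpr hv).symm)
  · refine mul_eq_zero_of_right _ (Finset.sum_eq_zero fun u _ ↦ if_neg fun hv ↦ h ?_)
    rw [sub_eq_iff_eq_add'.mpr hv]
    exact u.2

lemma hadamardPow_cosetState_apply (x z v : Fin n → ZMod 2) :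
    toEuclideanLin (hadamardPow n) (cosetState W x z) v = if z + v ∈ dualSpace W then
      ((√2 : ℂ) ^ (n - Module.finrank (ZMod 2) W))⁻¹ * signChar (v ⬝ᵥ x) else 0 := by
  have expand : toEuclideanLin (hadamardPow n) (cosetState W x z) v =
      ((√2 : ℂ) ^ Module.finrank (ZMod 2) W)⁻¹ *
        ∑ u : W, signChar (z ⬝ᵥ u) * hadamardPow n v (x + u) := by
    simp only [cosetState, map_smul, map_sum, WithLp.ofLp_smul, WithLp.ofLp_sum, Pi.smul_apply,
      Finset.sum_apply, smul_eq_mul, toEuclideanLin_single_one_apply, signChar_apply]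
  have factor : ∑ u : W, signChar (z ⬝ᵥ u) * hadamardPow n v (x + u) =
      ((√2 : ℂ) ^ n)⁻¹ * signChar (v ⬝ᵥ x) * ∑ u : W, signChar ((z + v) ⬝ᵥ u) := by
    simp only [Finset.mul_sum, hadamardPow_apply, dotProduct_add, add_dotProduct,
      AddChar.map_add_eq_mul]
    exact Finset.sum_congr rfl fun u _ ↦ by ring
  have hkn : Module.finrank (ZMod 2) W ≤ n := by simpa using W.finrank_le
  rw [expand, factor, sum_signChar_dotProduct]
  split_ifs
  · rw [← sqrt_two_pow_inv_mul_pow_inv_mul_two_pow hkn]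
    ring
  · simp

end CosetState

theorem hadamardPow_cosetState_general {n : ℕ} (W : Submodule (ZMod 2) (Fin n → ZMod 2))
    (x z : Fin n → ZMod 2) :
    Matrix.toEuclideanLin (hadamardPow n) (cosetState W x z) =
      ((-1 : ℂ) ^ (dotProduct x z).val) • cosetState (dualSpace W) z x := by
  ext v
  rw [hadamardPow_cosetState_apply, WithLp.ofLp_smul, Pi.smul_apply, cosetState_apply,
    finrank_dualSpace, ZModModule.sub_eq_add, add_comm v z]
  split_ifs
  · rw [← signChar_apply, smul_eq_mul, dotProduct_add, AddChar.map_add_eq_mul, dotProduct_comm v x]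
    linear_combination (-((√2 : ℂ) ^ (n - Module.finrank (ZMod 2) W))⁻¹ * signChar (x ⬝ᵥ v)) *
      signChar_mul_self (x ⬝ᵥ z)
  · rw [smul_zero]

/-- `H^{⊗n} |W_{x,z}⟩ = (-1)^{x·z} |W^⊥_{z,x}⟩`. -/
theorem hadamardPow_cosetState {n k : ℕ} (W : Submodule (ZMod 2) (Fin n → ZMod 2))
    (hW : Module.finrank (ZMod 2) W = k) (x z : Fin n → ZMod 2) :
    Matrix.toEuclideanLin (hadamardPow n) (cosetState W x z) =
      ((-1 : ℂ) ^ (dotProduct x z).val) • cosetState (dualSpace W) z x :=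
  hadamardPow_cosetState_general W x z
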